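/- arXiv:1910.10270 — 2 statements merged into one kernel-verified Lean document; each statement's English description precedes it below -/
import Mathlib

section
/- Let H be a locally tame strongly primary monoid. Then the catenary degree satisfies c(H) ≤ 1 + Λ(H) and c(H) ≤ max{M(u) − 1, t(H, u)} for every atom u; in particular, the set of distances Δ(H) is finite. -/
/-!
If every element has a factorization of length at most `Λ`, a factorization longer than `Λ + 1`
can be shortened by one step of distance `≤ Λ + 1`: refactor `Λ + 1` of its atoms with at most `Λ`
atoms. Iterating connects every factorization to a fixed short one.

For an atom `u`, any factorization of length `≥ M(u)` is a product of `M(u)` non-units, so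
`u ∣ a`. Then one tame step moves each factorization of `a = u c` to one containing `u`, and
cancelling `u` reduces to `c`, whose factorizations are shorter; strong primarity bounds the
lengths, which makes the induction work. If no factorization is that long, any two are at
distance `≤ M(u) - 1`.

Finally, a chain with steps `≤ N` changes the length by at most `N` per step, so it cannot jump
over a gap longer than `N` in a set of lengths: `Δ(H) ⊆ [0, N]`.
-/

open Pointwise

variable {M : Type*} [CancelCommMonoid M]

/-- The set of factorizations of `a` (in the associated reduced monoid):
multisets of irreducible associates whose product is the class of `a`. -/
def Zfac (a : M) : Set (Multiset (Associates M)) :=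
  {z | (∀ u ∈ z, Irreducible u) ∧ z.prod = Associates.mk a}

/-- Distance between two factorizations. -/
noncomputable def fdist (z z' : Multiset (Associates M)) : ℕ :=
  letI := Classical.decEq (Associates M)
  max (z - z').card (z' - z).card

/-- The set of lengths of `a`. -/
def Lset (a : M) : Set ℕ := {k | ∃ z ∈ Zfac a, Multiset.card z = k}

/-- `N` is a bound for the catenary degree of `M`: any two factorizations of any
element can be concatenated by an `N`-chain of factorizations. -/
def CatenaryBound (M : Type*) [CancelCommMonoid M] (N : ℕ) : Prop :=
  ∀ a : M, ∀ z ∈ Zfac a, ∀ z' ∈ Zfac a,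
    ∃ (k : ℕ) (c : Fin (k + 1) → Multiset (Associates M)),
      c 0 = z ∧ c (Fin.last k) = z' ∧ (∀ i, c i ∈ Zfac a) ∧
      ∀ i : Fin k, fdist (c i.castSucc) (c i.succ) ≤ N

/-- `N` is a bound for the local tame degree `t(H, u)` of the atom `u`. -/
def TameBound (u : Associates M) (N : ℕ) : Prop :=
  ∀ a : M, (∃ z ∈ Zfac a, u ∈ z) →
    ∀ z ∈ Zfac a, ∃ z' ∈ Zfac a, u ∈ z' ∧ fdist z z' ≤ N

/-- The set of distances Δ(M): successive distances occurring in sets of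
lengths. -/
def DeltaSet (M : Type*) [CancelCommMonoid M] : Set ℕ :=
  {d | 0 < d ∧ ∃ a : M, ∃ k, k ∈ Lset a ∧ k + d ∈ Lset a ∧
    ∀ j, k < j → j < k + d → j ∉ Lset a}

open Relation

theorem Multiset.exists_le_card_eq {α : Type*} {s : Multiset α} {n : ℕ}
    (h : n ≤ Multiset.card s) : ∃ t ≤ s, Multiset.card t = n := by
  obtain ⟨t, ht⟩ := Multiset.card_pos_iff_exists_mem.mp
    (by rw [Multiset.card_powersetCard]; exact Nat.choose_pos h)
  exact ⟨t, Multiset.mem_powersetCard.mp ht⟩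

theorem Set.multiset_prod_mem_pow {α : Type*} [CommMonoid α] {S : Set α} {l : Multiset α}
    (h : ∀ x ∈ l, x ∈ S) : l.prod ∈ S ^ Multiset.card l := by
  simpa [Multiset.map_const', Multiset.prod_replicate] using
    Set.multiset_prod_mem_multiset_prod l (fun _ => S) id h

theorem isUnit_of_mul_dvd_right {α : Type*} [CancelCommMonoid α] {x y : α} (h : x * y ∣ y) :
    IsUnit x := by
  obtain ⟨d, hd⟩ := h
  refine isUnit_of_dvd_one ⟨d, mul_left_cancel (a := y) ?_⟩
  calc y * 1 = x * y * d := by rw [mul_one, ← hd]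
    _ = y * (x * d) := by ac_rfl

theorem Associates.irreducible_mk_iff {α : Type*} [CommMonoid α] {a : α} :
    Irreducible (Associates.mk a) ↔ Irreducible a := by
  simp only [irreducible_iff, Associates.isUnit_mk, Associates.forall_associated,
    Associates.mk_mul_mk, Associates.mk_eq_mk_iff_associated]
  refine and_congr_right fun _ => ⟨fun h x y hxy => h x y (hxy ▸ .refl _), ?_⟩
  rintro h x y ⟨e, he⟩
  exact (h (by rw [← mul_assoc, ← he, Units.mul_inv_cancel_right] : a = x * (y * ↑e⁻¹))).imp_right
    isUnit_of_mul_isUnit_left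

instance : IsLeftCancelMul (Associates M) where
  mul_left_cancel := by
    rintro ⟨a⟩ ⟨b⟩ ⟨c⟩ h
    obtain ⟨e, he⟩ := Associates.mk_eq_mk_iff_associated.mp h
    rw [mul_assoc] at he
    exact Associates.mk_eq_mk_iff_associated.mpr ⟨e, mul_left_cancel he⟩

def IsStronglyPrimary (M : Type*) [CommMonoid M] : Prop :=
  ∀ a : M, ¬IsUnit a → ∃ n : ℕ, 0 < n ∧ {b : M | ¬IsUnit b} ^ n ⊆ {c : M | a ∣ c}

section PowSubsetDvd

variable {α : Type*} {a : α} {n : ℕ}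

theorem dvd_prod_of_le_card [CommMonoid α] (ha : {b : α | ¬IsUnit b} ^ n ⊆ {c : α | a ∣ c})
    {l : Multiset α} (hl : ∀ x ∈ l, ¬IsUnit x) (hn : n ≤ Multiset.card l) : a ∣ l.prod := by
  obtain ⟨s, hsl, rfl⟩ := Multiset.exists_le_card_eq hn
  exact (ha (Set.multiset_prod_mem_pow fun x hx => hl x (Multiset.mem_of_le hsl hx))).trans
    (Multiset.prod_dvd_prod_of_le hsl)

theorem card_le_of_prod_dvd [CancelCommMonoid α] (ha : {b : α | ¬IsUnit b} ^ n ⊆ {c : α | a ∣ c})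
    {l : Multiset α} (hl : ∀ x ∈ l, ¬IsUnit x) (hdvd : l.prod ∣ a) : Multiset.card l ≤ n := by
  classical
  by_contra! hn
  obtain ⟨x, hx⟩ := Multiset.card_pos_iff_exists_mem.mp (by omega : 0 < Multiset.card l)
  have hrest : a ∣ (l.erase x).prod :=
    dvd_prod_of_le_card ha (fun y hy => hl y (Multiset.mem_of_mem_erase hy))
      (by rw [Multiset.card_erase_of_mem hx]; exact Nat.le_pred_of_lt hn)
  refine hl x hx (isUnit_of_mul_dvd_right (y := (l.erase x).prod) ?_)
  rw [← Multiset.prod_cons, Multiset.cons_erase hx]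
  exact hdvd.trans hrest

end PowSubsetDvd

theorem exists_irreducible_factors_of_card_le {α : Type*} [CommMonoid α] (k : ℕ) {c : α}
    (hc : ¬IsUnit c)
    (hk : ∀ l : Multiset α, (∀ x ∈ l, ¬IsUnit x) → l.prod ∣ c → Multiset.card l ≤ k) :
    ∃ l : Multiset α, (∀ x ∈ l, Irreducible x) ∧ l.prod = c := by
  induction k generalizing c with
  | zero => simpa using hk {c} (by simpa using hc) (by simp)
  | succ k ih =>
    by_cases hirr : Irreducible c
    · exact ⟨{c}, by simpa using hirr, by simp⟩
    obtain ⟨x, y, rfl, hx, hy⟩ : ∃ x y, c = x * y ∧ ¬IsUnit x ∧ ¬IsUnit y := by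
      simpa [irreducible_iff, hc, not_or] using hirr
    -- a non-unit cofactor costs one factor, so each side inherits the bound `k`
    have factor : ∀ {p q : α}, ¬IsUnit p → ¬IsUnit q →
        (∀ l : Multiset α, (∀ x ∈ l, ¬IsUnit x) → l.prod ∣ p * q → Multiset.card l ≤ k + 1) →
        ∃ l : Multiset α, (∀ x ∈ l, Irreducible x) ∧ l.prod = p := fun hp hq hk =>
      ih hp fun l hl hdvd => by
        have := hk (_ ::ₘ l) (Multiset.forall_mem_cons.mpr ⟨hq, hl⟩)
          (by rw [Multiset.prod_cons, mul_comm]; exact mul_dvd_mul_right hdvd _)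
        simpa using this
    obtain ⟨lx, hlx, hlx'⟩ := factor hx hy hk
    obtain ⟨ly, hly, hly'⟩ := factor hy hx (by simpa only [mul_comm y x] using hk)
    refine ⟨lx + ly, fun z hz => ?_, by rw [Multiset.prod_add, hlx', hly']⟩
    exact (Multiset.mem_add.mp hz).elim (hlx z) (hly z)

theorem IsStronglyPrimary.exists_card_le (hM : IsStronglyPrimary M) (a : M) :
    ∃ n, ∀ l : Multiset M, (∀ x ∈ l, ¬IsUnit x) → l.prod ∣ a → Multiset.card l ≤ n := by
  by_cases ha : IsUnit a
  · refine ⟨0, fun l hl hdvd => ?_⟩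
    rw [Nat.le_zero, Multiset.card_eq_zero]
    exact Multiset.eq_zero_of_forall_notMem fun x hx =>
      hl x hx (isUnit_of_dvd_unit ((Multiset.dvd_prod hx).trans hdvd) ha)
  · obtain ⟨n, -, hn⟩ := hM a ha
    exact ⟨n, fun l hl => card_le_of_prod_dvd hn hl⟩

theorem exists_lift_of_mem_Zfac {a : M} {z : Multiset (Associates M)} (hz : z ∈ Zfac a) :
    ∃ l : Multiset M, l.map Associates.mk = z ∧ (∀ x ∈ l, Irreducible x) ∧ l.prod ∣ a := by
  obtain ⟨l, rfl⟩ := Multiset.map_surjective_of_surjective Associates.mk_surjective z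
  refine ⟨l, rfl, fun x hx =>
    Associates.irreducible_mk_iff.mp (hz.1 _ (Multiset.mem_map_of_mem _ hx)), ?_⟩
  rw [← Associates.mk_dvd_mk, ← Associates.prod_mk, hz.2]

theorem IsStronglyPrimary.Zfac_nonempty (hM : IsStronglyPrimary M) (c : M) :
    (Zfac c).Nonempty := by
  by_cases hc : IsUnit c
  · exact ⟨0, by simp, by simp [Associates.mk_eq_one.mpr hc]⟩
  obtain ⟨k, hk⟩ := hM.exists_card_le c
  obtain ⟨l, hl, rfl⟩ := exists_irreducible_factors_of_card_le k hc hk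
  refine ⟨l.map Associates.mk, fun x hx => ?_, Associates.prod_mk⟩
  obtain ⟨y, hy, rfl⟩ := Multiset.mem_map.mp hx
  exact Associates.irreducible_mk_iff.mpr (hl y hy)

theorem IsStronglyPrimary.exists_card_Zfac_le (hM : IsStronglyPrimary M) (a : M) :
    ∃ n, ∀ z ∈ Zfac a, Multiset.card z ≤ n := by
  obtain ⟨n, hn⟩ := hM.exists_card_le a
  refine ⟨n, fun z hz => ?_⟩
  obtain ⟨l, rfl, hl, hdvd⟩ := exists_lift_of_mem_Zfac hz
  simpa using hn l (fun x hx => (hl x hx).not_isUnit) hdvd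

theorem cons_mem_Zfac {u c : M} (hu : Irreducible u) {w : Multiset (Associates M)}
    (hw : w ∈ Zfac c) : Associates.mk u ::ₘ w ∈ Zfac (u * c) :=
  ⟨Multiset.forall_mem_cons.mpr ⟨Associates.irreducible_mk_iff.mpr hu, hw.1⟩,
    by rw [Multiset.prod_cons, hw.2, Associates.mk_mul_mk]⟩

theorem erase_mem_Zfac [DecidableEq (Associates M)] {u c : M} {z : Multiset (Associates M)}
    (hz : z ∈ Zfac (u * c)) (hu : Associates.mk u ∈ z) : z.erase (Associates.mk u) ∈ Zfac c :=
  ⟨fun x hx => hz.1 x (Multiset.mem_of_mem_erase hx), mul_left_cancel (a := Associates.mk u) <| by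
    rw [← Multiset.prod_cons, Multiset.cons_erase hu, hz.2, Associates.mk_mul_mk]⟩

theorem sub_add_mem_Zfac [DecidableEq (Associates M)] {a b : M} {z s y : Multiset (Associates M)}
    (hz : z ∈ Zfac a) (hs : s ≤ z) (hy : y ∈ Zfac b) (hsb : s.prod = Associates.mk b) :
    z - s + y ∈ Zfac a := by
  refine ⟨fun x hx => ?_, ?_⟩
  · exact (Multiset.mem_add.mp hx).elim (fun hx => hz.1 x (Multiset.mem_of_le tsub_le_self hx))
      (hy.1 x)
  · rw [Multiset.prod_add, hy.2, ← hsb, ← Multiset.prod_add, tsub_add_cancel_of_le hs, hz.2]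

theorem fdist_eq [DecidableEq (Associates M)] (z z' : Multiset (Associates M)) :
    fdist z z' = max (Multiset.card (z - z')) (Multiset.card (z' - z)) := by
  unfold fdist
  congr!

theorem fdist_comm (z z' : Multiset (Associates M)) : fdist z z' = fdist z' z := by
  classical
  rw [fdist_eq, fdist_eq, max_comm]

theorem fdist_le_max_card (z z' : Multiset (Associates M)) :
    fdist z z' ≤ max (Multiset.card z) (Multiset.card z') := by
  classical
  rw [fdist_eq]
  exact max_le_max (Multiset.card_le_card tsub_le_self) (Multiset.card_le_card tsub_le_self)

theorem card_le_card_add_fdist (z z' : Multiset (Associates M)) :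
    Multiset.card z' ≤ Multiset.card z + fdist z z' := by
  classical
  rw [fdist_eq]
  calc Multiset.card z' ≤ Multiset.card (z' - z + z) := Multiset.card_le_card Multiset.le_sub_add
    _ ≤ Multiset.card z + max (Multiset.card (z - z')) (Multiset.card (z' - z)) := by
      rw [Multiset.card_add]; omega

theorem fdist_add_left (x z z' : Multiset (Associates M)) :
    fdist (x + z) (x + z') = fdist z z' := by
  classical
  rw [fdist_eq, fdist_eq, add_tsub_add_eq_tsub_left, add_tsub_add_eq_tsub_left]

theorem TameBound.mono {u : Associates M} {N N' : ℕ} (h : TameBound u N) (hN : N ≤ N') :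
    TameBound u N' := fun a ha z hz =>
  (h a ha z hz).imp fun _ ⟨hz', hu, hd⟩ => ⟨hz', hu, hd.trans hN⟩

def CatenaryStep (N : ℕ) (a : M) (z z' : Multiset (Associates M)) : Prop :=
  z ∈ Zfac a ∧ z' ∈ Zfac a ∧ fdist z z' ≤ N

instance (N : ℕ) (a : M) : Std.Symm (CatenaryStep N a) where
  symm _ _ h := ⟨h.2.1, h.1, fdist_comm (M := M) _ _ ▸ h.2.2⟩

theorem catenaryBound_iff {N : ℕ} : CatenaryBound M N ↔
    ∀ a : M, ∀ z ∈ Zfac a, ∀ z' ∈ Zfac a, ReflTransGen (CatenaryStep N a) z z' := by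
  refine forall_congr' fun a => ⟨fun h z hz z' hz' => ?_, fun h z hz z' hz' => ?_⟩
  · obtain ⟨k, c, rfl, rfl, hc, hstep⟩ := h z hz z' hz'
    have hreach (i : Fin (k + 1)) : ReflTransGen (CatenaryStep N a) (c 0) (c i) := by
      induction i using Fin.induction with
      | zero => exact .refl
      | succ i ih => exact ih.tail ⟨hc _, hc _, hstep i⟩
    exact hreach _
  · have hzz' := h z hz z' hz'
    clear hz
    induction hzz' using ReflTransGen.head_induction_on with
    | refl => exact ⟨0, fun _ => z', rfl, rfl, fun _ => hz', fun i => i.elim0⟩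
    | head hstep _ ih =>
      obtain ⟨k, c, hc0, hcl, hc, hsteps⟩ := ih
      refine ⟨k + 1, Fin.cons _ c, rfl, by rw [← Fin.succ_last, Fin.cons_succ, hcl],
        Fin.cases hstep.1 hc, Fin.cases ?_ fun i => ?_⟩
      · simpa [hc0] using hstep.2.2
      · simpa [← Fin.succ_castSucc] using hsteps i

theorem Relation.ReflTransGen.catenaryStep_cons {N : ℕ} {u c : M} (hu : Irreducible u)
    {w w' : Multiset (Associates M)} (h : ReflTransGen (CatenaryStep N c) w w') :
    ReflTransGen (CatenaryStep N (u * c)) (Associates.mk u ::ₘ w) (Associates.mk u ::ₘ w') := by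
  induction h with
  | refl => exact .refl
  | tail _ hstep ih =>
    refine ih.tail ⟨cons_mem_Zfac hu hstep.1, cons_mem_Zfac hu hstep.2.1, ?_⟩
    rw [← Multiset.singleton_add, ← Multiset.singleton_add, fdist_add_left]
    exact hstep.2.2

section ShortFactorizations

variable {Λ : ℕ} (hΛ : ∀ a : M, (Zfac a).Nonempty → ∃ z ∈ Zfac a, Multiset.card z ≤ Λ)
include hΛ

theorem exists_catenaryStep_card_lt {a : M} {z : Multiset (Associates M)} (hz : z ∈ Zfac a)
    (hlong : Λ + 1 < Multiset.card z) :
    ∃ z₂, CatenaryStep (1 + Λ) a z z₂ ∧ Multiset.card z₂ < Multiset.card z := by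
  classical
  obtain ⟨s, hs, hcs⟩ := Multiset.exists_le_card_eq hlong.le
  obtain ⟨b, hb⟩ := Associates.mk_surjective s.prod
  obtain ⟨y, hy, hcy⟩ := hΛ b ⟨s, fun x hx => hz.1 x (Multiset.mem_of_le hs hx), hb.symm⟩
  refine ⟨z - s + y, ⟨hz, sub_add_mem_Zfac hz hs hy hb.symm, ?_⟩, ?_⟩
  · calc fdist z (z - s + y) = fdist (z - s + s) (z - s + y) := by rw [tsub_add_cancel_of_le hs]
      _ = fdist s y := fdist_add_left _ _ _
      _ ≤ max (Multiset.card s) (Multiset.card y) := fdist_le_max_card s y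
      _ ≤ 1 + Λ := by omega
  · rw [Multiset.card_add, Multiset.card_sub hs]
    omega

theorem reflTransGen_of_card_target_le {a : M} {z₀ : Multiset (Associates M)}
    (hz₀ : z₀ ∈ Zfac a) (hc₀ : Multiset.card z₀ ≤ Λ) (z : Multiset (Associates M))
    (hz : z ∈ Zfac a) :
    ReflTransGen (CatenaryStep (1 + Λ) a) z z₀ := by
  induction hn : Multiset.card z using Nat.strong_induction_on generalizing z with
  | _ n ih =>
  by_cases hlong : Λ + 1 < Multiset.card z
  · obtain ⟨z₂, hstep, hlt⟩ := exists_catenaryStep_card_lt hΛ hz hlong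
    exact .head hstep (ih _ (hn ▸ hlt) z₂ hstep.2.1 rfl)
  · exact .single ⟨hz, hz₀, (fdist_le_max_card z z₀).trans (by omega)⟩

theorem catenaryBound_one_add : CatenaryBound M (1 + Λ) := by
  refine catenaryBound_iff.mpr fun a z hz z' hz' => ?_
  obtain ⟨z₀, hz₀, hc₀⟩ := hΛ a ⟨z, hz⟩
  exact (reflTransGen_of_card_target_le hΛ hz₀ hc₀ z hz).trans
    (Std.Symm.symm _ _ (reflTransGen_of_card_target_le hΛ hz₀ hc₀ z' hz'))

end ShortFactorizations

section Tame

variable {u : M} (hu : Irreducible u)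
include hu

theorem reflTransGen_of_eq_mul {N : ℕ} (ht : TameBound (Associates.mk u) N) {c : M}
    (hc₀ : (Zfac c).Nonempty)
    (hc : ∀ w ∈ Zfac c, ∀ w' ∈ Zfac c, ReflTransGen (CatenaryStep N c) w w') :
    ∀ z ∈ Zfac (u * c), ∀ z' ∈ Zfac (u * c), ReflTransGen (CatenaryStep N (u * c)) z z' := by
  classical
  obtain ⟨w₀, hw₀⟩ := hc₀
  have hreach (z) (hz : z ∈ Zfac (u * c)) :
      ∃ w ∈ Zfac c, ReflTransGen (CatenaryStep N (u * c)) z (Associates.mk u ::ₘ w) := by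
    obtain ⟨z₁, hz₁, hu₁, hd⟩ :=
      ht (u * c) ⟨_, cons_mem_Zfac hu hw₀, Multiset.mem_cons_self _ _⟩ z hz
    refine ⟨z₁.erase (Associates.mk u), erase_mem_Zfac hz₁ hu₁, ?_⟩
    rw [Multiset.cons_erase hu₁]
    exact .single ⟨hz, hz₁, hd⟩
  intro z hz z' hz'
  obtain ⟨w, hw, hzw⟩ := hreach z hz
  obtain ⟨w', hw', hzw'⟩ := hreach z' hz'
  exact hzw.trans (((hc w hw w' hw').catenaryStep_cons hu).trans (Std.Symm.symm _ _ hzw'))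

variable (hM : IsStronglyPrimary M) {mu tu : ℕ}
    (hmu : {b : M | ¬IsUnit b} ^ mu ⊆ {c : M | u ∣ c}) (ht : TameBound (Associates.mk u) tu)
include hM hmu ht

theorem reflTransGen_of_forall_card_le (n : ℕ) (a : M)
    (ha : ∀ z ∈ Zfac a, Multiset.card z ≤ n) :
    ∀ z ∈ Zfac a, ∀ z' ∈ Zfac a, ReflTransGen (CatenaryStep (max (mu - 1) tu) a) z z' := by
  induction n generalizing a with
  | zero =>
    intro z hz z' hz'
    rw [Multiset.card_eq_zero.mp (Nat.le_zero.mp (ha z hz)),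
      Multiset.card_eq_zero.mp (Nat.le_zero.mp (ha z' hz'))]
  | succ n ih =>
    by_cases hlong : ∃ z ∈ Zfac a, mu ≤ Multiset.card z
    · obtain ⟨z, hz, hmuz⟩ := hlong
      obtain ⟨c, rfl⟩ : u ∣ a := by
        obtain ⟨l, rfl, hl, hdvd⟩ := exists_lift_of_mem_Zfac hz
        exact (dvd_prod_of_le_card hmu (fun x hx => (hl x hx).not_isUnit)
          (by simpa using hmuz)).trans hdvd
      refine reflTransGen_of_eq_mul hu (ht.mono (le_max_right _ _)) (hM.Zfac_nonempty c)
        (ih c fun w hw => ?_)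
      simpa using ha _ (cons_mem_Zfac hu hw)
    · push Not at hlong
      intro z hz z' hz'
      have := hlong z hz
      have := hlong z' hz'
      exact .single ⟨hz, hz', (fdist_le_max_card z z').trans (by omega)⟩

theorem catenaryBound_max_of_tameBound : CatenaryBound M (max (mu - 1) tu) := by
  refine catenaryBound_iff.mpr fun a => ?_
  obtain ⟨n, hn⟩ := hM.exists_card_Zfac_le a
  exact reflTransGen_of_forall_card_le hu hM hmu ht n a hn

end Tame

theorem CatenaryBound.deltaSet_subset_Iic {N : ℕ} (h : CatenaryBound M N) :
    DeltaSet M ⊆ Set.Iic N := by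
  rintro d ⟨hd, a, k, ⟨z, hz, rfl⟩, ⟨z', hz', hz'k⟩, hgap⟩
  rw [Set.mem_Iic]
  by_contra! hdN
  -- a step changes the length by at most `N < d`, so no chain starting at `z` crosses the gap
  have hshort (y) (hy : ReflTransGen (CatenaryStep N a) z y) :
      Multiset.card y ≤ Multiset.card z := by
    induction hy with
    | refl => exact le_rfl
    | tail _ hstep ih =>
      have := card_le_card_add_fdist _ _ |>.trans (Nat.add_le_add ih hstep.2.2)
      by_contra! hlt
      exact hgap _ hlt (by omega) ⟨_, hstep.2.1, rfl⟩
  have := hshort z' (catenaryBound_iff.mp h a z hz z' hz')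
  omega

theorem IsStronglyPrimary.exists_catenaryBound (hM : IsStronglyPrimary M)
    (htame : ∀ u : Associates M, Irreducible u → ∃ N : ℕ, TameBound u N) :
    ∃ N, CatenaryBound M N := by
  by_cases hatom : ∃ u : M, Irreducible u
  · obtain ⟨u, hu⟩ := hatom
    obtain ⟨mu, -, hmu⟩ := hM u hu.not_isUnit
    obtain ⟨tu, htu⟩ := htame _ (Associates.irreducible_mk_iff.mpr hu)
    exact ⟨_, catenaryBound_max_of_tameBound hu hM hmu htu⟩
  · have hZfac (a : M) (y) (hy : y ∈ Zfac a) : y = 0 :=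
      Multiset.eq_zero_of_forall_notMem fun x hx => by
        obtain ⟨v, rfl⟩ := Associates.mk_surjective x
        exact hatom ⟨v, Associates.irreducible_mk_iff.mp (hy.1 _ hx)⟩
    refine ⟨0, catenaryBound_iff.mpr fun a z hz z' hz' => ?_⟩
    rw [hZfac a z hz, hZfac a z' hz']

theorem stronglyPrimary_catenary_bounds_general (M : Type*) [CancelCommMonoid M]
    (hsp : ∀ a : M, ¬IsUnit a → ∃ n : ℕ, 0 < n ∧
      {b : M | ¬IsUnit b} ^ n ⊆ {c : M | a ∣ c})
    (htame : ∀ u : Associates M, Irreducible u → ∃ N : ℕ, TameBound u N) :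
    (∀ Λ : ℕ, (∀ a : M, (Zfac a).Nonempty → ∃ z ∈ Zfac a, Multiset.card z ≤ Λ) →
      CatenaryBound M (1 + Λ)) ∧
    (∀ u : M, Irreducible u → ∀ mu tu : ℕ,
      IsLeast {n : ℕ | 0 < n ∧ {b : M | ¬IsUnit b} ^ n ⊆ {c : M | u ∣ c}} mu →
      TameBound (Associates.mk u) tu →
      CatenaryBound M (max (mu - 1) tu)) ∧
    (DeltaSet M).Finite := by
  refine ⟨fun Λ hΛ => catenaryBound_one_add hΛ,
    fun u hu mu tu hmu ht => catenaryBound_max_of_tameBound hu hsp hmu.1.2 ht, ?_⟩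
  obtain ⟨N, hN⟩ := IsStronglyPrimary.exists_catenaryBound hsp htame
  exact (Set.finite_Iic N).subset hN.deltaSet_subset_Iic

/-- For a locally tame strongly primary monoid, the catenary degree is at most
1 + Λ(H), and at most max{M(u) − 1, t(H,u)} for every atom u; in particular the
set of distances Δ(H) is finite. -/
theorem stronglyPrimary_catenary_bounds (M : Type*) [CancelCommMonoid M]
    (hm : ∃ a : M, ¬IsUnit a)
    (hsp : ∀ a : M, ¬IsUnit a → ∃ n : ℕ, 0 < n ∧
      {b : M | ¬IsUnit b} ^ n ⊆ {c : M | a ∣ c})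
    (htame : ∀ u : Associates M, Irreducible u → ∃ N : ℕ, TameBound u N) :
    (∀ Λ : ℕ, (∀ a : M, (Zfac a).Nonempty → ∃ z ∈ Zfac a, Multiset.card z ≤ Λ) →
      CatenaryBound M (1 + Λ)) ∧
    (∀ u : M, Irreducible u → ∀ mu tu : ℕ,
      IsLeast {n : ℕ | 0 < n ∧ {b : M | ¬IsUnit b} ^ n ⊆ {c : M | u ∣ c}} mu →
      TameBound (Associates.mk u) tu →
      CatenaryBound M (max (mu - 1) tu)) ∧
    (DeltaSet M).Finite :=
  stronglyPrimary_catenary_bounds_general M hsp htame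
end

section
/- Let α > 1 be irrational and H = N₀ ∪ Q>α ⊆ Q≥0. Then H is a Puiseux monoid whose set of atoms is A(H) = {1} ∪ {q ∈ Q ∖ N : α < q ≤ 1+α}, and the elasticity of H equals 1 + α; in particular H is an atomic primary BF-monoid with irrational elasticity. -/
open scoped ENNReal

/-- The Puiseux monoid H = ℕ₀ ∪ ℚ>α for a real number α > 1. -/
def Halpha (α : ℝ) (hα : 1 < α) : AddSubmonoid ℚ where
  carrier := {q : ℚ | (∃ n : ℕ, q = (n : ℚ)) ∨ α < (q : ℝ)}
  zero_mem' := Or.inl ⟨0, by norm_num⟩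
  add_mem' := by
    rintro x y (⟨n, rfl⟩ | hx) (⟨m, rfl⟩ | hy)
    · exact Or.inl ⟨n + m, by push_cast; ring⟩
    · right; push_cast
      have : (0 : ℝ) ≤ (n : ℝ) := Nat.cast_nonneg n
      linarith
    · right; push_cast
      have : (0 : ℝ) ≤ (m : ℝ) := Nat.cast_nonneg m
      linarith
    · right; push_cast; linarith

/-- An element of a Puiseux monoid is an atom if it is nonzero and not the sum
of two nonzero elements. -/
def PuiseuxAtom (H : AddSubmonoid ℚ) (u : ℚ) : Prop :=
  u ∈ H ∧ u ≠ 0 ∧ ¬∃ x ∈ H, ∃ y ∈ H, x ≠ 0 ∧ y ≠ 0 ∧ u = x + y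

/-- Set of lengths of an element of a Puiseux monoid. -/
def PuiseuxL (H : AddSubmonoid ℚ) (a : ℚ) : Set ℕ :=
  {k : ℕ | ∃ f : Fin k → ℚ, (∀ i, PuiseuxAtom H (f i)) ∧ a = ∑ i, f i}

/-- Elasticity of a Puiseux monoid, as an extended nonnegative real. -/
noncomputable def PuiseuxElasticity (H : AddSubmonoid ℚ) : ℝ≥0∞ :=
  ⨆ a ∈ {x : ℚ | x ∈ H ∧ x ≠ 0},
    (⨆ k ∈ PuiseuxL H a, (k : ℝ≥0∞)) / ⨅ k ∈ PuiseuxL H a, (k : ℝ≥0∞)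

section
variable {α : ℝ} {hα : 1 < α}

lemma mem_Halpha {q : ℚ} : q ∈ Halpha α hα ↔ (∃ n : ℕ, q = (n : ℚ)) ∨ α < (q : ℝ) := Iff.rfl

lemma one_le_of_mem {q : ℚ} (hq : q ∈ Halpha α hα) (h0 : q ≠ 0) : 1 ≤ q := by
  rcases hq with ⟨n, rfl⟩ | h
  · have : n ≠ 0 := by rintro rfl; simp at h0
    exact_mod_cast Nat.one_le_iff_ne_zero.mpr this
  · have : (1 : ℝ) < (q : ℝ) := lt_trans hα h
    exact_mod_cast this.le

lemma atom_one : PuiseuxAtom (Halpha α hα) 1 := by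
  refine ⟨Or.inl ⟨1, by norm_num⟩, one_ne_zero, ?_⟩
  rintro ⟨x, hx, y, hy, hx0, hy0, hxy⟩
  have h1 := one_le_of_mem hx hx0
  have h2 := one_le_of_mem hy hy0
  linarith [hxy]

lemma atom_of_between {q : ℚ} (hnat : ¬∃ n : ℕ, q = (n : ℚ)) (h1 : α < (q : ℝ))
    (h2 : (q : ℝ) ≤ 1 + α) : PuiseuxAtom (Halpha α hα) q := by
  refine ⟨Or.inr h1, ?_, ?_⟩
  · rintro rfl; push_cast at h1; linarith
  rintro ⟨x, hx, y, hy, hx0, hy0, hxy⟩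
  have hx1 := one_le_of_mem hx hx0
  have hy1 := one_le_of_mem hy hy0
  have hx1' : (1 : ℝ) ≤ (x : ℝ) := by exact_mod_cast hx1
  have hy1' : (1 : ℝ) ≤ (y : ℝ) := by exact_mod_cast hy1
  have hxy' : (q : ℝ) = (x : ℝ) + (y : ℝ) := by exact_mod_cast hxy
  rcases hx with ⟨n, rfl⟩ | hxα
  · rcases hy with ⟨m, rfl⟩ | hyα
    · exact hnat ⟨n + m, by push_cast at hxy ⊢; linarith⟩
    · linarith
  · linarith

lemma atom_le {u : ℚ} (hu : PuiseuxAtom (Halpha α hα) u) : (u : ℝ) ≤ 1 + α := by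
  by_contra h
  push_neg at h
  refine hu.2.2 ⟨1, Or.inl ⟨1, by norm_num⟩, u - 1, Or.inr (by push_cast; linarith), one_ne_zero, ?_, by ring⟩
  intro h0
  have : (u : ℚ) = 1 := by linarith [sub_eq_zero.mp h0]
  rw [this] at h; push_cast at h; linarith

lemma atom_ge_one {u : ℚ} (hu : PuiseuxAtom (Halpha α hα) u) : 1 ≤ u :=
  one_le_of_mem hu.1 hu.2.1

lemma atoms_eq (_hirr : Irrational α) :
    {u : ℚ | PuiseuxAtom (Halpha α hα) u} =
      {1} ∪ {q : ℚ | (¬∃ n : ℕ, q = (n : ℚ)) ∧ α < (q : ℝ) ∧ (q : ℝ) ≤ 1 + α} := by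
  ext u
  simp only [Set.mem_setOf_eq, Set.mem_union, Set.mem_singleton_iff]
  constructor
  · intro hu
    by_cases hnat : ∃ n : ℕ, u = (n : ℚ)
    · left
      obtain ⟨n, rfl⟩ := hnat
      have hn0 : n ≠ 0 := by rintro rfl; exact hu.2.1 (by norm_num)
      by_contra hne
      have hn2 : 2 ≤ n := by
        rcases Nat.lt_or_ge n 2 with h | h
        · interval_cases n
          · exact absurd rfl hn0
          · exact absurd (by norm_num) hne
        · exact h
      refine hu.2.2 ⟨1, Or.inl ⟨1, by norm_num⟩, (n : ℚ) - 1, Or.inl ⟨n - 1, by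
          push_cast [Nat.cast_sub (by omega : 1 ≤ n)]; ring⟩, one_ne_zero, ?_, by ring⟩
      intro h0
      have : (n : ℚ) = 1 := by linarith [sub_eq_zero.mp h0]
      exact hne this
    · right
      have hαu : α < (u : ℝ) := by
        rcases hu.1 with h | h
        · exact absurd h hnat
        · exact h
      exact ⟨hnat, hαu, atom_le hu⟩
  · rintro (rfl | ⟨hnat, h1, h2⟩)
    · exact atom_one
    · exact atom_of_between hnat h1 h2

end

section
variable {α : ℝ} {hα : 1 < α}

lemma atomic_aux : ∀ a ∈ Halpha α hα, a ≠ 0 → ∃ (k : ℕ) (f : Fin k → ℚ),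
    (∀ i, PuiseuxAtom (Halpha α hα) (f i)) ∧ a = ∑ i, f i := by
  intro a ha ha0
  by_cases hnat : ∃ n : ℕ, a = (n : ℚ)
  · obtain ⟨n, rfl⟩ := hnat
    exact ⟨n, fun _ => 1, fun _ => atom_one, by simp⟩
  · have haα : α < (a : ℝ) := by
      rcases ha with h | h
      · exact absurd h hnat
      · exact h
    set t : ℕ := ⌈(a : ℝ) - (1 + α)⌉₊ with ht
    have h1 : (a : ℝ) - (t : ℝ) ≤ 1 + α := by
      have := Nat.le_ceil ((a : ℝ) - (1 + α)); linarith
    have h2 : α < (a : ℝ) - (t : ℝ) := by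
      by_cases hc : (a : ℝ) - (1 + α) ≤ 0
      · have : t = 0 := Nat.ceil_eq_zero.mpr hc
        rw [this]; push_cast; linarith
      · push_neg at hc
        have := Nat.ceil_lt_add_one (le_of_lt hc)
        rw [← ht] at this; linarith
    have hq : PuiseuxAtom (Halpha α hα) (a - (t : ℚ)) := by
      apply atom_of_between
      · rintro ⟨m, hm⟩
        exact hnat ⟨m + t, by push_cast at hm ⊢; linarith⟩
      · push_cast; linarith
      · push_cast; linarith
    refine ⟨t + 1, Fin.cons (a - (t : ℚ)) (fun _ => 1), ?_, ?_⟩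
    · intro i
      refine Fin.cases ?_ ?_ i
      · exact hq
      · intro j; exact atom_one
    · rw [Fin.sum_cons]; simp

lemma sum_lb {k : ℕ} (f : Fin k → ℚ) (hf : ∀ i, PuiseuxAtom (Halpha α hα) (f i)) :
    (k : ℚ) ≤ ∑ i, f i := by
  calc (k : ℚ) = ∑ _i : Fin k, (1 : ℚ) := by simp
  _ ≤ ∑ i, f i := Finset.sum_le_sum fun i _ => atom_ge_one (hf i)

lemma sum_ub {k : ℕ} (f : Fin k → ℚ) (hf : ∀ i, PuiseuxAtom (Halpha α hα) (f i)) :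
    ((∑ i, f i : ℚ) : ℝ) ≤ (k : ℝ) * (1 + α) := by
  push_cast
  calc ∑ i, ((f i : ℝ)) ≤ ∑ _i : Fin k, (1 + α) := Finset.sum_le_sum fun i _ => atom_le (hf i)
  _ = (k : ℝ) * (1 + α) := by simp [Finset.sum_const]; ring

lemma bf_aux : ∀ a ∈ Halpha α hα, a ≠ 0 →
    (PuiseuxL (Halpha α hα) a).Finite ∧ (PuiseuxL (Halpha α hα) a).Nonempty := by
  intro a ha ha0
  constructor
  · apply Set.Finite.subset (Set.finite_Iic ⌈a⌉₊)
    rintro k ⟨f, hf, rfl⟩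
    have := sum_lb f hf
    simpa using Nat.ceil_mono this
  · obtain ⟨k, f, hf, hsum⟩ := atomic_aux a ha ha0
    exact ⟨k, f, hf, hsum⟩

lemma primary_aux : ∀ x ∈ Halpha α hα, x ≠ 0 → ∀ y ∈ Halpha α hα, y ≠ 0 →
    ∃ n : ℕ, 0 < n ∧ ∃ h ∈ Halpha α hα, (n : ℚ) * y = x + h := by
  intro x hx hx0 y hy hy0
  have hy1 : (1 : ℝ) ≤ (y : ℝ) := by exact_mod_cast one_le_of_mem hy hy0
  obtain ⟨n, hnx⟩ : ∃ n : ℕ, (x : ℝ) + α < (n : ℝ) ∧ 0 < n := by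
    refine ⟨⌈(x : ℝ) + α⌉₊ + 1, ?_, Nat.succ_pos _⟩
    have := Nat.le_ceil ((x : ℝ) + α)
    push_cast; linarith
  obtain ⟨hnx, hn0⟩ := hnx
  refine ⟨n, hn0, (n : ℚ) * y - x, Or.inr ?_, by ring⟩
  have hny : (n : ℝ) ≤ (n : ℝ) * (y : ℝ) := le_mul_of_one_le_right (Nat.cast_nonneg n) hy1
  push_cast
  linarith
end

section
variable {α : ℝ} (hα : 1 < α)

lemma elas_upper : PuiseuxElasticity (Halpha α hα) ≤ ENNReal.ofReal (1 + α) := by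
  apply iSup₂_le
  rintro a ⟨ha, ha0⟩
  set L := PuiseuxL (Halpha α hα) a with hL
  obtain ⟨-, hne⟩ := bf_aux a ha ha0
  set m0 : ℕ := sInf L with hm0
  have hm0L : m0 ∈ L := Nat.sInf_mem hne
  have hinf : (m0 : ℝ≥0∞) ≤ ⨅ k ∈ L, (k : ℝ≥0∞) := by
    apply le_iInf₂
    intro k hk
    exact_mod_cast Nat.cast_le.mpr (Nat.sInf_le hk)
  have key : ∀ k ∈ L, (k : ℝ≥0∞) ≤ ENNReal.ofReal (1 + α) * (m0 : ℝ≥0∞) := by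
    rintro k ⟨f, hf, hsum⟩
    obtain ⟨g, hg, hsumg⟩ := hm0L
    have h1 : (k : ℚ) ≤ a := hsum ▸ sum_lb f hf
    have h2 : (a : ℝ) ≤ (m0 : ℝ) * (1 + α) := hsumg ▸ sum_ub g hg
    have h1' : (k : ℝ) ≤ (a : ℝ) := by exact_mod_cast h1
    have hfin : (k : ℝ) ≤ (1 + α) * (m0 : ℝ) := by linarith
    calc (k : ℝ≥0∞) = ENNReal.ofReal (k : ℝ) := by rw [ENNReal.ofReal_natCast]
    _ ≤ ENNReal.ofReal ((1 + α) * (m0 : ℝ)) := ENNReal.ofReal_le_ofReal hfin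
    _ = ENNReal.ofReal (1 + α) * ENNReal.ofReal (m0 : ℝ) :=
        ENNReal.ofReal_mul (by linarith)
    _ = ENNReal.ofReal (1 + α) * (m0 : ℝ≥0∞) := by rw [ENNReal.ofReal_natCast]
  calc (⨆ k ∈ L, (k : ℝ≥0∞)) / ⨅ k ∈ L, (k : ℝ≥0∞)
      ≤ (⨆ k ∈ L, (k : ℝ≥0∞)) / (m0 : ℝ≥0∞) := ENNReal.div_le_div le_rfl hinf
  _ ≤ ENNReal.ofReal (1 + α) := ENNReal.div_le_of_le_mul (iSup₂_le key)

end

section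
variable {α : ℝ} (hα : 1 < α)

lemma elas_lower (_hirr : Irrational α) :
    ENNReal.ofReal (1 + α) ≤ PuiseuxElasticity (Halpha α hα) := by
  apply ENNReal.le_of_forall_nnreal_lt
  intro r hr
  have hα0 : (0 : ℝ) < α := by linarith
  have hr' : (r : ℝ) < 1 + α := by
    rw [← ENNReal.ofReal_coe_nnreal] at hr
    exact (ENNReal.ofReal_lt_ofReal_iff (by linarith)).mp hr
  set n0 : ℕ := ⌈α⌉₊ with hn0
  have hn0α : α ≤ (n0 : ℝ) := Nat.le_ceil α
  have hn0lt : (n0 : ℝ) < 1 + α := by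
    have := Nat.ceil_lt_add_one (le_of_lt hα0)
    rw [← hn0] at this; linarith
  have hb : max (r : ℝ) (n0 : ℝ) < 1 + α := max_lt hr' hn0lt
  obtain ⟨q, hq1, hq2⟩ := exists_rat_btwn hb
  have hrq : (r : ℝ) < (q : ℝ) := lt_of_le_of_lt (le_max_left _ _) hq1
  have hn0q : (n0 : ℝ) < (q : ℝ) := lt_of_le_of_lt (le_max_right _ _) hq1
  have hqα : α < (q : ℝ) := lt_of_le_of_lt hn0α hn0q
  have hqnat : ¬∃ m : ℕ, q = (m : ℚ) := by
    rintro ⟨m, rfl⟩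
    have h1 : (n0 : ℝ) < (m : ℝ) := by push_cast at hn0q ⊢; exact hn0q
    have h2 : (m : ℝ) < (n0 : ℝ) + 1 := by push_cast at hq2 ⊢; linarith
    have : n0 < m := by exact_mod_cast h1
    have : m < n0 + 1 := by exact_mod_cast h2
    omega
  have hqatom : PuiseuxAtom (Halpha α hα) q := atom_of_between hqnat hqα (le_of_lt hq2)
  have hqpos : (0 : ℚ) < q := by
    have : (0 : ℝ) < (q : ℝ) := lt_trans hα0 hqα
    exact_mod_cast this
  set U : ℕ := q.num.toNat with hU
  set v : ℕ := q.den with hv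
  have hUq : (U : ℚ) = (q.num : ℚ) := by
    rw [hU]; exact_mod_cast Int.toNat_of_nonneg (le_of_lt (Rat.num_pos.mpr hqpos))
  have hv0 : (0 : ℚ) < (v : ℚ) := by exact_mod_cast q.pos
  have hvq : (v : ℚ) * q = (U : ℚ) := by
    rw [hUq]
    conv_lhs => rw [← Rat.num_div_den q]
    rw [hv]
    field_simp
  -- real versions
  have hvqR : (v : ℝ) * (q : ℝ) = (U : ℝ) := by exact_mod_cast congrArg (Rat.cast (K := ℝ)) hvq
  have hv0R : (0 : ℝ) < (v : ℝ) := by exact_mod_cast q.pos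
  set d : ℝ := (U : ℝ) - (r : ℝ) * (v : ℝ) with hd
  have hd0 : 0 < d := by
    have : (r : ℝ) * (v : ℝ) < (q : ℝ) * (v : ℝ) := by
      exact mul_lt_mul_of_pos_right hrq hv0R
    rw [hd]; nlinarith [hvqR]
  set k : ℕ := ⌈(r : ℝ) / d⌉₊ with hk
  have hkd : (r : ℝ) ≤ (k : ℝ) * d := by
    have h1 : (r : ℝ) / d ≤ (k : ℝ) := Nat.le_ceil _
    calc (r : ℝ) = ((r : ℝ) / d) * d := by field_simp
    _ ≤ (k : ℝ) * d := mul_le_mul_of_nonneg_right h1 (le_of_lt hd0)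
  set a : ℚ := ((k * U : ℕ) : ℚ) + q with ha_def
  have haR : (a : ℝ) = ((k * U : ℕ) : ℝ) + (q : ℝ) := by rw [ha_def]; push_cast; ring
  have ha : a ∈ Halpha α hα := by
    right
    rw [haR]
    have : (0 : ℝ) ≤ ((k * U : ℕ) : ℝ) := Nat.cast_nonneg _
    linarith
  have ha0 : a ≠ 0 := by
    intro h
    rw [h] at haR
    have : (0 : ℝ) ≤ ((k * U : ℕ) : ℝ) := Nat.cast_nonneg _
    simp at haR
    linarith
  set L := PuiseuxL (Halpha α hα) a with hL
  have hN1 : k * U + 1 ∈ L := by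
    refine ⟨Fin.cons q (fun _ => 1), ?_, ?_⟩
    · intro i
      refine Fin.cases ?_ ?_ i
      · exact hqatom
      · intro j; exact atom_one
    · rw [Fin.sum_cons]; simp [ha_def]; ring
  have hN2 : k * v + 1 ∈ L := by
    refine ⟨fun _ => q, fun _ => hqatom, ?_⟩
    rw [Finset.sum_const, Finset.card_univ, Fintype.card_fin, nsmul_eq_mul, ha_def]
    push_cast
    nlinarith [hvq]
  have hreal : (r : ℝ) * ((k * v + 1 : ℕ) : ℝ) ≤ ((k * U + 1 : ℕ) : ℝ) := by
    push_cast
    have h1 : (k : ℝ) * d ≥ (r : ℝ) := hkd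
    rw [hd] at h1
    have : (r : ℝ) * ((k : ℝ) * (v : ℝ)) ≤ (k : ℝ) * (U : ℝ) - (r:ℝ) + (r:ℝ) := by nlinarith
    nlinarith
  have hdivle : (r : ℝ≥0∞) ≤ ((k * U + 1 : ℕ) : ℝ≥0∞) / ((k * v + 1 : ℕ) : ℝ≥0∞) := by
    rw [ENNReal.le_div_iff_mul_le (Or.inl (by exact_mod_cast Nat.succ_ne_zero (k * v)))
      (Or.inl (ENNReal.natCast_ne_top _))]
    calc (r : ℝ≥0∞) * ((k * v + 1 : ℕ) : ℝ≥0∞)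
        = ENNReal.ofReal ((r : ℝ) * ((k * v + 1 : ℕ) : ℝ)) := by
          rw [ENNReal.ofReal_mul r.coe_nonneg, ENNReal.ofReal_coe_nnreal,
            ENNReal.ofReal_natCast]
    _ ≤ ENNReal.ofReal (((k * U + 1 : ℕ) : ℝ)) := ENNReal.ofReal_le_ofReal hreal
    _ = ((k * U + 1 : ℕ) : ℝ≥0∞) := ENNReal.ofReal_natCast _
  refine le_trans ?_ (le_iSup₂ (f := fun x _ =>
    (⨆ k ∈ PuiseuxL (Halpha α hα) x, (k : ℝ≥0∞)) / ⨅ k ∈ PuiseuxL (Halpha α hα) x, (k : ℝ≥0∞))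
    a ⟨ha, ha0⟩)
  refine le_trans hdivle ?_
  exact ENNReal.div_le_div
    (le_iSup₂ (f := fun (n : ℕ) (_ : n ∈ PuiseuxL (Halpha α hα) a) => (n : ℝ≥0∞)) (k * U + 1) hN1)
    (iInf₂_le (f := fun (n : ℕ) (_ : n ∈ PuiseuxL (Halpha α hα) a) => (n : ℝ≥0∞)) (k * v + 1) hN2)
end


/-- For α > 1 irrational, H = ℕ₀ ∪ ℚ>α is an atomic primary BF-monoid whose
atoms are {1} ∪ {q ∈ ℚ∖ℕ : α < q ≤ 1+α} and whose elasticity is the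
irrational number 1 + α. -/
theorem Halpha_atoms_and_elasticity (α : ℝ) (hα : 1 < α) (hirr : Irrational α) :
    ({u : ℚ | PuiseuxAtom (Halpha α hα) u} =
      {1} ∪ {q : ℚ | (¬∃ n : ℕ, q = (n : ℚ)) ∧ α < (q : ℝ) ∧ (q : ℝ) ≤ 1 + α}) ∧
    (PuiseuxElasticity (Halpha α hα) = ENNReal.ofReal (1 + α)) ∧
    -- H is atomic
    (∀ a ∈ Halpha α hα, a ≠ 0 → ∃ (k : ℕ) (f : Fin k → ℚ),
      (∀ i, PuiseuxAtom (Halpha α hα) (f i)) ∧ a = ∑ i, f i) ∧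
    -- H is a BF-monoid
    (∀ a ∈ Halpha α hα, a ≠ 0 →
      (PuiseuxL (Halpha α hα) a).Finite ∧ (PuiseuxL (Halpha α hα) a).Nonempty) ∧
    -- H is primary
    (∀ x ∈ Halpha α hα, x ≠ 0 → ∀ y ∈ Halpha α hα, y ≠ 0 →
      ∃ n : ℕ, 0 < n ∧ ∃ h ∈ Halpha α hα, (n : ℚ) * y = x + h) := by
  refine ⟨atoms_eq hirr, le_antisymm (elas_upper hα) (elas_lower hα hirr),
    atomic_aux, bf_aux, primary_aux⟩
end
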